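/- In a tree, if a longest path has vertices p_0, p_1, ..., p_ℓ with ℓ ≥ 3 and the vertex p_1 has degree greater than 2, then the tree has an involution (namely, swapping p_0 with another leaf neighbour of p_1). -/

import Mathlib

/-!
Both ends of a longest path in a forest are leaves. A third neighbour `x` of `p₁` lies off
the path, so `x p₁ p₂ … p_ℓ` is another longest path and `x` is a leaf at `p₁` as well. The
leaves `p₀` and `x` then have the same neighbourhood, and swapping them is an involutive
automorphism.
-/

/-- A permutation of the vertices is an automorphism of the simple graph G. -/
def IsGraphAut {V : Type} (G : SimpleGraph V) (σ : Equiv.Perm V) : Prop :=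
  ∀ u v, G.Adj u v ↔ G.Adj (σ u) (σ v)

theorem isGraphAut_swap_of_neighborSet_eq {V : Type} [DecidableEq V] {G : SimpleGraph V}
    {u v : V} (h : G.neighborSet u = G.neighborSet v) : IsGraphAut G (Equiv.swap u v) := by
  have huv : ∀ w, G.Adj u w ↔ G.Adj v w := fun w => Set.ext_iff.mp h w
  intro w z
  simp only [Equiv.swap_apply_def]
  split_ifs <;> subst_vars <;> grind [G.adj_comm, G.loopless]

namespace SimpleGraph

variable {V : Type} {G : SimpleGraph V}

def Walk.IsLongestPath {a b : V} (p : G.Walk a b) : Prop :=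
  p.IsPath ∧ ∀ (c d : V) (q : G.Walk c d), q.IsPath → q.length ≤ p.length

theorem IsAcyclic.getVert_one_eq_of_adj_of_mem_support [DecidableEq V] (hG : G.IsAcyclic)
    {c d y : V} {q : G.Walk c d} (hq : q.IsPath) (hy : y ∈ q.support) (hadj : G.Adj c y) :
    q.getVert 1 = y := by
  have hunique : (⟨q.takeUntil y hy, hq.takeUntil hy⟩ : G.Path c y) = Path.singleton hadj :=
    (hG.subsingleton_path c y).elim _ _
  have hlen : (q.takeUntil y hy).length = 1 := by
    simpa using congrArg (fun r : G.Path c y => r.1.length) hunique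
  rw [← q.take_spec hy, Walk.getVert_append]
  simp [hlen]

namespace Walk

variable {a b : V} {p : G.Walk a b}

theorem IsLongestPath.not_nil_of_adj (hp : p.IsLongestPath) {u v : V} (huv : G.Adj u v) :
    ¬p.Nil :=
  not_nil_iff_lt_length.mpr <| hp.2 _ _ (cons huv nil) (by simp [huv.ne])

theorem IsLongestPath.neighborSet_start_eq (hG : G.IsAcyclic) (hp : p.IsLongestPath)
    (hnil : ¬p.Nil) : G.neighborSet a = {p.getVert 1} := by
  classical
  ext y
  refine ⟨fun hy => ?_, fun hy => (Set.mem_singleton_iff.mp hy) ▸ p.adj_snd hnil⟩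
  by_cases hmem : y ∈ p.support
  · exact (hG.getVert_one_eq_of_adj_of_mem_support hp.1 hmem hy).symm
  · have := hp.2 _ _ (cons (G.adj_symm hy) p) (hp.1.cons hmem)
    simp at this

end Walk

end SimpleGraph

open SimpleGraph Walk in
theorem stmt12_general {V : Type} [Fintype V] [DecidableEq V] (G : SimpleGraph V)
    [DecidableRel G.Adj] (htree : G.IsTree) {a b : V} (p : G.Walk a b)
    (hp : p.IsPath)
    (hlong : ∀ (c d : V) (q : G.Walk c d), q.IsPath → q.length ≤ p.length)
    (hdeg : 2 < G.degree (p.getVert 1)) :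
    ∃ σ : Equiv.Perm V, IsGraphAut G σ ∧ orderOf σ = 2 := by
  have hP : p.IsLongestPath := ⟨hp, hlong⟩
  obtain ⟨x, hx, hxp⟩ := Finset.exists_mem_notMem_of_card_lt_card <|
    (Finset.card_le_two (a := a) (b := p.getVert 2)).trans_lt
      (G.card_neighborFinset_eq_degree _ ▸ hdeg)
  rw [mem_neighborFinset] at hx
  obtain ⟨hxa, hx2⟩ : x ≠ a ∧ x ≠ p.getVert 2 := by simpa [not_or] using hxp
  have hnil : ¬p.Nil := hP.not_nil_of_adj hx
  have hxq : x ∉ p.tail.support := fun hmem =>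
    hx2 (by simpa using (htree.isAcyclic.getVert_one_eq_of_adj_of_mem_support hp.tail hmem hx).symm)
  have hQ : (cons hx.symm p.tail).IsLongestPath :=
    ⟨hp.tail.cons hxq, by rw [length_cons, length_tail_add_one hnil]; exact hlong⟩
  have htwins : G.neighborSet a = G.neighborSet x := by
    rw [hP.neighborSet_start_eq htree.isAcyclic hnil,
      hQ.neighborSet_start_eq htree.isAcyclic not_nil_cons]
    simp
  exact ⟨_, isGraphAut_swap_of_neighborSet_eq htwins,
    Equiv.Perm.IsSwap.orderOf ⟨a, x, hxa.symm, rfl⟩⟩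

/-- If in a tree a longest path p_0, ..., p_ℓ has ℓ ≥ 3 and p_1 has degree greater
than 2, then the tree has an involution. -/
theorem stmt12 {V : Type} [Fintype V] [DecidableEq V] (G : SimpleGraph V)
    [DecidableRel G.Adj] (htree : G.IsTree) {a b : V} (p : G.Walk a b)
    (hp : p.IsPath)
    (hlong : ∀ (c d : V) (q : G.Walk c d), q.IsPath → q.length ≤ p.length)
    (hlen : 3 ≤ p.length) (hdeg : 2 < G.degree (p.getVert 1)) :
    ∃ σ : Equiv.Perm V, IsGraphAut G σ ∧ orderOf σ = 2 :=
  stmt12_general G htree p hp hlong hdeg
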